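/- arXiv:2605.06258 — 2 statements merged into one kernel-verified Lean document; each statement's English description precedes it below -/
import Mathlib

section
/- Let σ: ℝ → ℝ be L-Lipschitz and applied elementwise, h ∈ ℝ^n with ‖h‖₂ = 1, W ∈ ℝ^{m×n}, and W⁺ = W - γ∇_W𝓛 a single gradient step on the data point producing h, where ∇_W𝓛 = (∇_z𝓛)hᵀ for z = Wh and ∇_z𝓛 = σ'(z) ⊙ ∇_σ(z)𝓛 with |σ'(z)_i| ≤ L for all i. Then elementwise |σ(W⁺h) - σ(Wh)| ≤ L² · |γ ∇_{σ(z)}𝓛| = L² |h⁺ - h|, where h⁺ = σ(Wh) - γ∇_{σ(Wh)}𝓛 is the virtual update of the post-activation. -/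
open Matrix

/-! The rank-one gradient step `W⁺ = W - γ (∇_z𝓛) hᵀ` moves the pre-activation by
`-γ ‖h‖² ∇_z𝓛 = -γ ∇_z𝓛`. Since `σ` is `L`-Lipschitz and `∇_z𝓛 = σ'(z) ⊙ ∇_{σ(z)}𝓛`
with `|σ'(z)_i| ≤ L`, each coordinate of the post-activation moves by at most
`L · L |γ ∇_{σ(z)}𝓛|_i`. -/

theorem sub_smul_vecMulVec_mulVec {m n : Type*} [Fintype n] {R : Type*} [CommRing R]
    (W : Matrix m n R) (γ : R) (u : m → R) (v : n → R) :
    (W - γ • vecMulVec u v) *ᵥ v = W *ᵥ v - (γ * (v ⬝ᵥ v)) • u := by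
  rw [sub_mulVec, smul_mulVec, vecMulVec_mulVec, op_smul_eq_smul, smul_smul]

theorem abs_sub_mul_comp_sub_le_sq_mul {σ : ℝ → ℝ} {L : ℝ}
    (hσ : ∀ a b : ℝ, |σ a - σ b| ≤ L * |a - b|) {s : ℝ} (hs : |s| ≤ L) (z c : ℝ) :
    |σ (z - s * c) - σ z| ≤ L ^ 2 * |c| := by
  have hL : 0 ≤ L := (abs_nonneg s).trans hs
  calc |σ (z - s * c) - σ z|
      ≤ L * (|s| * |c|) := by simpa [abs_mul] using hσ (z - s * c) z
    _ ≤ L * (L * |c|) := by gcongr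
    _ = L ^ 2 * |c| := by ring

/-- Proposition 3.3 (magnitude part): with `σ` L-Lipschitz, `‖h‖₂ = 1`,
`∇_z𝓛 = σ'(z) ⊙ ∇_{σ(z)}𝓛` with `|σ'(z)_i| ≤ L`, and `W⁺ = W - γ(∇_z𝓛)hᵀ`,
elementwise `|σ(W⁺h) - σ(Wh)| ≤ L²·|γ ∇_{σ(z)}𝓛|`. -/
theorem stmt3 {m n : ℕ} (σ : ℝ → ℝ) (L : ℝ)
    (hσ : ∀ a b : ℝ, |σ a - σ b| ≤ L * |a - b|)
    (W : Matrix (Fin m) (Fin n) ℝ) (h : Fin n → ℝ)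
    (hh : ∑ i, h i ^ 2 = 1)
    (γ : ℝ) (s gradpost gradz : Fin m → ℝ)
    (hs : ∀ i, |s i| ≤ L)
    (hgz : ∀ i, gradz i = s i * gradpost i)
    (Wp : Matrix (Fin m) (Fin n) ℝ)
    (hWp : Wp = W - γ • vecMulVec gradz h) :
    ∀ i, |σ (Wp.mulVec h i) - σ (W.mulVec h i)| ≤ L ^ 2 * |γ * gradpost i| := by
  intro i
  have hunit : h ⬝ᵥ h = 1 := by simpa [dotProduct, sq] using hh
  have hstep : (Wp *ᵥ h) i = (W *ᵥ h) i - s i * (γ * gradpost i) := by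
    rw [hWp, sub_smul_vecMulVec_mulVec, hunit, mul_one, Pi.sub_apply, Pi.smul_apply, hgz,
      smul_eq_mul, mul_left_comm]
  rw [hstep]
  exact abs_sub_mul_comp_sub_le_sq_mul hσ (hs i) _ _
end

section
/- Let H ∈ ℝ^{d×N} with N > d, Y ∈ ℝ^N with Y ≠ Ȳ (where Ȳ is the constant vector of the mean of Y), λ > 0, W with ‖W‖_op ≤ c₀, ‖H‖_F ≤ c₁, and define the Target Linearity 𝒯_λ(H,Y) = 1 - ‖Y - Hᵀ(HHᵀ+λI)⁻¹HY‖₂²/‖Y - Ȳ‖₂², and the surrogate S = YᵀHᵀWᵀWHY. If S > 0, then 𝒯_λ(H,Y) ≥ 1 - C/S, where C = ‖Y‖₂⁴ c₀² (2λ + c₁²)² / (4λ ‖Y - Ȳ‖₂²). -/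
/-!
The ridge residual `r = Y - Hᵀ(HHᵀ + λI)⁻¹HY` is a shrinkage of `Y`: with `u = (HHᵀ + λI)⁻¹HY`
one has `Y = r + Hᵀu` and `Hr = λu`, so `⟪r, Hᵀu⟫ = λ‖u‖² ≥ 0` and `‖r‖ ≤ ‖Y‖`.
On the other side `S = ‖WHY‖² ≤ c₀²c₁²‖Y‖²`, hence `‖r‖²·S ≤ c₀²c₁²‖Y‖⁴`, and AM–GM
`4λc₁² ≤ (2λ + c₁²)²` turns this into the claimed bound.
-/

open Matrix

section DotProduct

variable {m n : Type*} [Fintype m] [Fintype n]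

theorem dotProduct_self_nonneg (v : n → ℝ) : 0 ≤ v ⬝ᵥ v :=
  Finset.sum_nonneg fun i _ => mul_self_nonneg (v i)

theorem dotProduct_self_pos {v : n → ℝ} (hv : v ≠ 0) : 0 < v ⬝ᵥ v :=
  (dotProduct_self_nonneg v).lt_of_ne fun h => hv (dotProduct_self_eq_zero.mp h.symm)

theorem dotProduct_transpose_mul_self_mulVec (B : Matrix m n ℝ) (v : n → ℝ) :
    v ⬝ᵥ (Bᵀ * B) *ᵥ v = (B *ᵥ v) ⬝ᵥ (B *ᵥ v) := by
  rw [← mulVec_mulVec, dotProduct_mulVec, vecMul_transpose]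

theorem mulVec_dotProduct_self_le_sum_sq_mul (H : Matrix m n ℝ) (v : n → ℝ) :
    (H *ᵥ v) ⬝ᵥ (H *ᵥ v) ≤ (∑ i, ∑ j, H i j ^ 2) * (v ⬝ᵥ v) := by
  have hv : v ⬝ᵥ v = ∑ j, v j ^ 2 := by simp only [dotProduct, sq]
  rw [Finset.sum_mul, hv]
  refine Finset.sum_le_sum fun i _ => ?_
  simpa only [mulVec, dotProduct, sq] using
    Finset.sum_mul_sq_le_sq_mul_sq Finset.univ (fun j => H i j) v

theorem dotProduct_self_le_of_mulVec_eq_smul (H : Matrix m n ℝ) {l : ℝ} (hl : 0 ≤ l)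
    {u : m → ℝ} {v : n → ℝ} (h : H *ᵥ v = l • u) :
    v ⬝ᵥ v ≤ (v + Hᵀ *ᵥ u) ⬝ᵥ (v + Hᵀ *ᵥ u) := by
  have hcross : v ⬝ᵥ Hᵀ *ᵥ u = l * (u ⬝ᵥ u) := by
    rw [mulVec_transpose, dotProduct_comm, ← dotProduct_mulVec, h, dotProduct_smul,
      smul_eq_mul]
  have hexpand : (v + Hᵀ *ᵥ u) ⬝ᵥ (v + Hᵀ *ᵥ u)
      = v ⬝ᵥ v + 2 * (l * (u ⬝ᵥ u)) + (Hᵀ *ᵥ u) ⬝ᵥ (Hᵀ *ᵥ u) := by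
    rw [add_dotProduct, dotProduct_add, dotProduct_add, dotProduct_comm (Hᵀ *ᵥ u) v, hcross]
    ring
  rw [hexpand]
  have := mul_nonneg hl (dotProduct_self_nonneg u)
  linarith [dotProduct_self_nonneg (Hᵀ *ᵥ u)]

theorem dotProduct_gram_mulVec_le {k : Type*} [Fintype k] (W : Matrix k m ℝ) (H : Matrix m n ℝ)
    {c : ℝ} (hW : ∀ v : m → ℝ, (W *ᵥ v) ⬝ᵥ (W *ᵥ v) ≤ c ^ 2 * (v ⬝ᵥ v)) (Y : n → ℝ) :
    Y ⬝ᵥ (Hᵀ * Wᵀ * W * H) *ᵥ Y ≤ c ^ 2 * (∑ i, ∑ j, H i j ^ 2) * (Y ⬝ᵥ Y) := by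
  have hWH : Hᵀ * Wᵀ * W * H = (W * H)ᵀ * (W * H) := by
    rw [transpose_mul, Matrix.mul_assoc]
  rw [hWH, dotProduct_transpose_mul_self_mulVec, ← mulVec_mulVec, mul_assoc]
  exact (hW _).trans <|
    mul_le_mul_of_nonneg_left (mulVec_dotProduct_self_le_sum_sq_mul H Y) (sq_nonneg c)

end DotProduct

section Ridge

variable {m n : Type*} [Fintype m] [Fintype n] [DecidableEq m]

theorem posDef_mul_transpose_add_smul_one (H : Matrix m n ℝ) {l : ℝ} (hl : 0 < l) :
    (H * Hᵀ + l • (1 : Matrix m m ℝ)).PosDef := by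
  simpa only [conjTranspose_eq_transpose_of_trivial] using
    PosDef.posSemidef_add (posSemidef_self_mul_conjTranspose H) (PosDef.one.smul hl)

theorem ridge_residual_dotProduct_self_le (H : Matrix m n ℝ) {l : ℝ} (hl : 0 < l)
    (Y : n → ℝ) :
    (Y - (Hᵀ * (H * Hᵀ + l • (1 : Matrix m m ℝ))⁻¹ * H) *ᵥ Y) ⬝ᵥ
        (Y - (Hᵀ * (H * Hᵀ + l • (1 : Matrix m m ℝ))⁻¹ * H) *ᵥ Y) ≤ Y ⬝ᵥ Y := by
  set A := H * Hᵀ + l • (1 : Matrix m m ℝ) with hA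
  have hAdet : IsUnit A.det :=
    (isUnit_iff_isUnit_det A).mp (posDef_mul_transpose_add_smul_one H hl).isUnit
  set u := A⁻¹ *ᵥ (H *ᵥ Y)
  have hAu : A *ᵥ u = H *ᵥ Y := by
    rw [mulVec_mulVec, mul_nonsing_inv A hAdet, one_mulVec]
  have hHr : H *ᵥ (Y - Hᵀ *ᵥ u) = l • u := by
    rw [mulVec_sub, mulVec_mulVec, ← hAu, hA, add_mulVec, smul_mulVec, one_mulVec]
    abel
  have hres : Y - (Hᵀ * A⁻¹ * H) *ᵥ Y = Y - Hᵀ *ᵥ u := by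
    rw [← mulVec_mulVec, ← mulVec_mulVec]
  rw [hres]
  simpa using dotProduct_self_le_of_mulVec_eq_smul H hl.le hHr

end Ridge

theorem stmt18_general {d N mdim : ℕ}
    (H : Matrix (Fin d) (Fin N) ℝ) (Y : Fin N → ℝ)
    (l : ℝ) (hl : 0 < l)
    (W : Matrix (Fin mdim) (Fin d) ℝ) (c0 c1 : ℝ)
    (hW : ∀ v : Fin d → ℝ, (W.mulVec v) ⬝ᵥ (W.mulVec v) ≤ c0 ^ 2 * (v ⬝ᵥ v))
    (hH : ∑ i, ∑ j, (H i j) ^ 2 ≤ c1 ^ 2)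
    (Ybar : Fin N → ℝ)
    (hYne : Y ≠ Ybar)
    (S : ℝ) (hS : S = Y ⬝ᵥ (Hᵀ * Wᵀ * W * H).mulVec Y) (hSpos : 0 < S) :
    1 - ((Y - (Hᵀ * (H * Hᵀ + l • (1 : Matrix (Fin d) (Fin d) ℝ))⁻¹ * H).mulVec Y) ⬝ᵥ
          (Y - (Hᵀ * (H * Hᵀ + l • (1 : Matrix (Fin d) (Fin d) ℝ))⁻¹ * H).mulVec Y))
        / ((Y - Ybar) ⬝ᵥ (Y - Ybar))
      ≥ 1 - ((Y ⬝ᵥ Y) ^ 2 * c0 ^ 2 * (2 * l + c1 ^ 2) ^ 2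
          / (4 * l * ((Y - Ybar) ⬝ᵥ (Y - Ybar)))) / S := by
  set R := (Y - (Hᵀ * (H * Hᵀ + l • (1 : Matrix (Fin d) (Fin d) ℝ))⁻¹ * H).mulVec Y) ⬝ᵥ
    (Y - (Hᵀ * (H * Hᵀ + l • (1 : Matrix (Fin d) (Fin d) ℝ))⁻¹ * H).mulVec Y)
  have hR : R ≤ Y ⬝ᵥ Y := ridge_residual_dotProduct_self_le H hl Y
  have hYY := dotProduct_self_nonneg Y
  have hSle : S ≤ c0 ^ 2 * c1 ^ 2 * (Y ⬝ᵥ Y) :=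
    hS ▸ (dotProduct_gram_mulVec_le W H hW Y).trans (by gcongr)
  have hamgm : 4 * l * c1 ^ 2 ≤ (2 * l + c1 ^ 2) ^ 2 := by nlinarith [sq_nonneg (2 * l - c1 ^ 2)]
  have key : R * S * (4 * l) ≤ (Y ⬝ᵥ Y) ^ 2 * c0 ^ 2 * (2 * l + c1 ^ 2) ^ 2 :=
    calc R * S * (4 * l) ≤ (Y ⬝ᵥ Y) * (c0 ^ 2 * c1 ^ 2 * (Y ⬝ᵥ Y)) * (4 * l) := by
          gcongr
      _ = c0 ^ 2 * (Y ⬝ᵥ Y) ^ 2 * (4 * l * c1 ^ 2) := by ring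
      _ ≤ c0 ^ 2 * (Y ⬝ᵥ Y) ^ 2 * (2 * l + c1 ^ 2) ^ 2 := by gcongr
      _ = _ := by ring
  have hD : 0 < (Y - Ybar) ⬝ᵥ (Y - Ybar) := dotProduct_self_pos (sub_ne_zero.mpr hYne)
  rw [ge_iff_le, sub_le_sub_iff_left, div_div, div_le_div_iff₀ hD (by positivity)]
  linarith [mul_le_mul_of_nonneg_left key hD.le]

/-- Theorem 4.3 (surrogate lower-bounds Target Linearity): with `N > d`, `λ > 0`,
`‖W‖_op ≤ c₀` (quadratic-form formulation), `‖H‖_F ≤ c₁`, `Y ≠ Ȳ`, and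
`S = YᵀHᵀWᵀWHY > 0`, the Target Linearity satisfies `𝒯_λ(H,Y) ≥ 1 - C/S` with
`C = ‖Y‖₂⁴ c₀² (2λ + c₁²)² / (4λ ‖Y - Ȳ‖₂²)`. -/
theorem stmt18 {d N mdim : ℕ} (hdN : d < N)
    (H : Matrix (Fin d) (Fin N) ℝ) (Y : Fin N → ℝ)
    (l : ℝ) (hl : 0 < l)
    (W : Matrix (Fin mdim) (Fin d) ℝ) (c0 c1 : ℝ)
    (hW : ∀ v : Fin d → ℝ, (W.mulVec v) ⬝ᵥ (W.mulVec v) ≤ c0 ^ 2 * (v ⬝ᵥ v))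
    (hH : ∑ i, ∑ j, (H i j) ^ 2 ≤ c1 ^ 2)
    (Ybar : Fin N → ℝ) (hYbar : Ybar = fun _ => (∑ i, Y i) / N)
    (hYne : Y ≠ Ybar)
    (S : ℝ) (hS : S = Y ⬝ᵥ (Hᵀ * Wᵀ * W * H).mulVec Y) (hSpos : 0 < S) :
    1 - ((Y - (Hᵀ * (H * Hᵀ + l • (1 : Matrix (Fin d) (Fin d) ℝ))⁻¹ * H).mulVec Y) ⬝ᵥ
          (Y - (Hᵀ * (H * Hᵀ + l • (1 : Matrix (Fin d) (Fin d) ℝ))⁻¹ * H).mulVec Y))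
        / ((Y - Ybar) ⬝ᵥ (Y - Ybar))
      ≥ 1 - ((Y ⬝ᵥ Y) ^ 2 * c0 ^ 2 * (2 * l + c1 ^ 2) ^ 2
          / (4 * l * ((Y - Ybar) ⬝ᵥ (Y - Ybar)))) / S :=
  stmt18_general H Y l hl W c0 c1 hW hH Ybar hYne S hS hSpos
end
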